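/- arXiv:math/0007030 — 2 statements merged into one kernel-verified Lean document; each statement's English description precedes it below -/
import Mathlib

section
/- Let Z be a complex Gaussian random variable with mean zero and E|Z|^2 = 1, defined on a probability space (Ω, ν). Then for every measurable set E with ν(E) > 0, the integral ∫_E log|Z| dν is at most (ν(E)/2)·log(1/ν(E)). -/
/-!
Jensen's inequality for the concave function `log` on `E`, in tangent-line form: for every
`a > 0`, `log (a t²) ≤ a t² - 1`. Integrating over `E` with `a = ν(E)` and using
`∫_E |Z|² ≤ E|Z|² = 1` gives `2 ∫_E log|Z| ≤ ν(E) - ν(E) - ν(E) log ν(E)`. The tangent bound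
fails at `t = 0` (where `log 0 = 0` in Lean); the Gaussian law rules this out, as
`ν {|Z| ≤ 0} = 1 - exp 0 = 0`.
-/

open MeasureTheory Real

theorem Real.two_mul_log_le_mul_sq_sub_one_sub_log {a t : ℝ} (ha : 0 < a) (ht : 0 < t) :
    2 * log t ≤ a * t ^ 2 - 1 - log a := by
  have h := log_le_sub_one_of_pos (mul_pos ha (pow_pos ht 2))
  rw [log_mul ha.ne' (pow_pos ht 2).ne', log_pow] at h
  push_cast at h
  linarith

theorem MeasureTheory.setIntegral_log_le_of_setIntegral_sq_le_one {Ω : Type*}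
    [MeasurableSpace Ω] {ν : Measure Ω} {f : Ω → ℝ} {E : Set Ω}
    (hf_pos : ∀ᵐ x ∂ν.restrict E, 0 < f x) (hf_sq : IntegrableOn (fun x => f x ^ 2) E ν)
    (hf_sq_le : ∫ x in E, f x ^ 2 ∂ν ≤ 1) (hE : ν E ≤ 1) :
    ∫ x in E, log (f x) ∂ν ≤ (ν E).toReal / 2 * log (1 / (ν E).toReal) := by
  set p := (ν E).toReal with hp
  have hE_top : ν E ≠ ⊤ := ne_top_of_le_ne_top ENNReal.one_ne_top hE
  have : IsFiniteMeasure (ν.restrict E) := isFiniteMeasure_restrict.2 hE_top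
  have hp_le : p ≤ 1 := by simpa using ENNReal.toReal_mono ENNReal.one_ne_top hE
  rcases (ENNReal.toReal_nonneg : 0 ≤ p).eq_or_lt with hp_zero | hp_pos
  · have hE_zero : ν E = 0 :=
      (ENNReal.toReal_eq_zero_iff _).1 hp_zero.symm |>.resolve_right hE_top
    simp [setIntegral_measure_zero _ hE_zero, hp, hE_zero]
  have h_rhs_nonneg : 0 ≤ p / 2 * log (1 / p) :=
    mul_nonneg (by positivity) (log_nonneg (one_le_one_div hp_pos hp_le))
  by_cases h_log : IntegrableOn (fun x => log (f x)) E ν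
  swap
  · rwa [integral_undef h_log]
  have h_tangent : ∀ᵐ x ∂ν.restrict E, 2 * log (f x) ≤ p * f x ^ 2 - 1 - log p := by
    filter_upwards [hf_pos] with x hx
    exact two_mul_log_le_mul_sq_sub_one_sub_log hp_pos hx
  have h_bound : IntegrableOn (fun x => p * f x ^ 2 - 1 - log p) E ν :=
    ((hf_sq.const_mul p).sub (integrable_const 1)).sub (integrable_const (log p))
  have h_int := integral_mono_ae (h_log.const_mul 2) h_bound h_tangent
  have h_rhs :
      ∫ x in E, (p * f x ^ 2 - 1 - log p) ∂ν = p * ∫ x in E, f x ^ 2 ∂ν - p - p * log p := by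
    rw [integral_sub (f := fun x => p * f x ^ 2 - 1)
      ((hf_sq.const_mul p).sub (integrable_const 1)) (integrable_const _),
      integral_sub (hf_sq.const_mul p) (integrable_const _), integral_const_mul, setIntegral_const, setIntegral_const]
    simp [Measure.real, hp]
  rw [integral_const_mul, h_rhs] at h_int
  have h_sq_mass := mul_le_mul_of_nonneg_left hf_sq_le hp_pos.le
  rw [one_div, log_inv]
  linarith

theorem stmt_0_general {Ω : Type*} [MeasurableSpace Ω] (ν : Measure Ω) [IsProbabilityMeasure ν]
    (Z : Ω → ℂ)
    (hvar : ∫ x, ‖Z x‖ ^ 2 ∂ν = 1)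
    (hlaw : ∀ s : ℝ, 0 ≤ s → ν {x | ‖Z x‖ ≤ s} = ENNReal.ofReal (1 - Real.exp (-s ^ 2)))
    (E : Set Ω) :
    ∫ x in E, Real.log ‖Z x‖ ∂ν ≤ (ν E).toReal / 2 * Real.log (1 / (ν E).toReal) := by
  have hZ_pos : ∀ᵐ x ∂ν, 0 < ‖Z x‖ := by
    have h_atom : ν {x | ‖Z x‖ ≤ 0} = 0 := by rw [hlaw 0 le_rfl]; simp
    filter_upwards [measure_eq_zero_iff_ae_notMem.1 h_atom] with x hx
    simpa using hx
  have hZ_sq : Integrable (fun x => ‖Z x‖ ^ 2) ν := .of_integral_ne_zero (by simp [hvar])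
  refine setIntegral_log_le_of_setIntegral_sq_le_one (ae_restrict_of_ae hZ_pos)
    hZ_sq.integrableOn ?_ prob_le_one
  exact hvar ▸ setIntegral_le_integral hZ_sq (.of_forall fun x => sq_nonneg _)

/-- Offord's upper bound (Jensen step): for a complex Gaussian random variable `Z`
with mean zero and `E|Z|² = 1`, for every measurable set `E` of positive measure,
`∫_E log|Z| dν ≤ (ν(E)/2) log(1/ν(E))`. -/
theorem stmt_0 {Ω : Type*} [MeasurableSpace Ω] (ν : Measure Ω) [IsProbabilityMeasure ν]
    (Z : Ω → ℂ) (hZmeas : Measurable Z)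
    (hmean : ∫ x, Z x ∂ν = 0)
    (hvar : ∫ x, ‖Z x‖ ^ 2 ∂ν = 1)
    (hlaw : ∀ s : ℝ, 0 ≤ s → ν {x | ‖Z x‖ ≤ s} = ENNReal.ofReal (1 - Real.exp (-s ^ 2)))
    (E : Set Ω) (hE : MeasurableSet E) (hEpos : 0 < ν E) :
    ∫ x in E, Real.log ‖Z x‖ ∂ν ≤ (ν E).toReal / 2 * Real.log (1 / (ν E).toReal) :=
  stmt_0_general ν Z hvar hlaw E
end

section
/- Let Z be a complex Gaussian random variable with mean zero and E|Z|^2 = 1. Then for every measurable set E, ∫_E log⁻|Z| dν ≤ ν(E)·(log(1/ν(E)) + 1/4), where log⁻ t = max(−log t, 0). -/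
/-!
Split `log⁻ ‖Z‖` at the level `a = log (1 / ν E)`. On `E` the part below `a` contributes at most
`a · ν E`, and the excess `(-log ‖Z‖ - a)⁺` may be integrated over the whole space by the
layer-cake formula. Its tail `{excess > t}` lies in the small ball `‖Z‖ ≤ e^{-(a+t)}`, of
probability at most `e^{-2(a+t)} / 2` because `1 - e^{-x} ≤ x`, so the excess integrates to at most
`e^{-2a} / 4 = (ν E)² / 4 ≤ ν E / 4`.
-/

open MeasureTheory Real Set

lemma lintegral_Ioi_ofReal_exp_neg_two_mul :
    ∫⁻ t in Ioi (0 : ℝ), ENNReal.ofReal (exp (-2 * t)) = ENNReal.ofReal (1 / 2) := by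
  rw [← ofReal_integral_eq_lintegral_ofReal (exp_neg_integrableOn_Ioi 0 two_pos)
    (.of_forall fun t => (exp_pos _).le), integral_exp_mul_Ioi (by norm_num)]
  norm_num

section SmallBall

variable {Ω E : Type*} [MeasurableSpace Ω] [NormedAddCommGroup E] {μ : Measure Ω}
  {Z : Ω → E} {c : ℝ}

lemma setLIntegral_ofReal_le_mul_add {f g : Ω → ℝ} {a : ℝ} (hfg : ∀ x, f x ≤ a + g x)
    (s : Set Ω) :
    ∫⁻ x in s, ENNReal.ofReal (f x) ∂μ
      ≤ ENNReal.ofReal a * μ s + ∫⁻ x, ENNReal.ofReal (g x) ∂μ :=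
  calc ∫⁻ x in s, ENNReal.ofReal (f x) ∂μ
      ≤ ∫⁻ x in s, (ENNReal.ofReal a + ENNReal.ofReal (g x)) ∂μ :=
        lintegral_mono fun x => (ENNReal.ofReal_le_ofReal (hfg x)).trans ENNReal.ofReal_add_le
    _ = ENNReal.ofReal a * μ s + ∫⁻ x in s, ENNReal.ofReal (g x) ∂μ := by
        rw [lintegral_add_left measurable_const, setLIntegral_const]
    _ ≤ ENNReal.ofReal a * μ s + ∫⁻ x, ENNReal.ofReal (g x) ∂μ :=
        add_le_add_right (setLIntegral_le_lintegral _ _) _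

lemma measure_lt_max_neg_log_norm_sub_le
    (hball : ∀ s, 0 ≤ s → μ {x | ‖Z x‖ ≤ s} ≤ ENNReal.ofReal (c * s ^ 2))
    (a : ℝ) {t : ℝ} (ht : 0 < t) :
    μ {x | t < max (-log ‖Z x‖ - a) 0}
      ≤ ENNReal.ofReal (c * exp (-2 * a)) * ENNReal.ofReal (exp (-2 * t)) := by
  have hsub : {x | t < max (-log ‖Z x‖ - a) 0} ⊆ {x | ‖Z x‖ ≤ exp (-(a + t))} := by
    intro x hx
    simp only [mem_ofPred_eq, lt_max_iff, ht.not_gt, or_false] at hx ⊢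
    rcases (norm_nonneg (Z x)).eq_or_lt with h0 | h0
    · rw [← h0]; exact (exp_pos _).le
    · rw [← exp_log h0]; exact exp_le_exp.mpr (by linarith)
  calc μ {x | t < max (-log ‖Z x‖ - a) 0} ≤ ENNReal.ofReal (c * exp (-(a + t)) ^ 2) :=
        (measure_mono hsub).trans (hball _ (exp_pos _).le)
    _ = ENNReal.ofReal (c * exp (-2 * a)) * ENNReal.ofReal (exp (-2 * t)) := by
        rw [← ENNReal.ofReal_mul' (exp_pos _).le, mul_assoc, ← exp_add, ← exp_nat_mul]
        ring_nf

variable [MeasurableSpace E] [OpensMeasurableSpace E]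

lemma lintegral_ofReal_max_neg_log_norm_sub_le (hZ : Measurable Z)
    (hball : ∀ s, 0 ≤ s → μ {x | ‖Z x‖ ≤ s} ≤ ENNReal.ofReal (c * s ^ 2)) (a : ℝ) :
    ∫⁻ x, ENNReal.ofReal (max (-log ‖Z x‖ - a) 0) ∂μ ≤ ENNReal.ofReal (c * exp (-2 * a) / 2) := by
  have hmeas : Measurable fun x => max (-log ‖Z x‖ - a) 0 := by fun_prop
  rw [lintegral_eq_lintegral_meas_lt μ (f := fun x => max (-log ‖Z x‖ - a) 0)
    (.of_forall fun x => le_max_right _ _) hmeas.aemeasurable]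
  calc ∫⁻ t in Ioi 0, μ {x | t < max (-log ‖Z x‖ - a) 0}
      ≤ ∫⁻ t in Ioi 0, ENNReal.ofReal (c * exp (-2 * a)) * ENNReal.ofReal (exp (-2 * t)) :=
        setLIntegral_mono' measurableSet_Ioi fun t ht =>
          measure_lt_max_neg_log_norm_sub_le hball a ht
    _ = ENNReal.ofReal (c * exp (-2 * a) / 2) := by
        rw [lintegral_const_mul _ (by fun_prop), lintegral_Ioi_ofReal_exp_neg_two_mul,
          ← ENNReal.ofReal_mul' (by norm_num), mul_one_div]

lemma setLIntegral_ofReal_max_neg_log_norm_le (hZ : Measurable Z)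
    (hball : ∀ s, 0 ≤ s → μ {x | ‖Z x‖ ≤ s} ≤ ENNReal.ofReal (c * s ^ 2))
    {a : ℝ} (ha : 0 ≤ a) (s : Set Ω) :
    ∫⁻ x in s, ENNReal.ofReal (max (-log ‖Z x‖) 0) ∂μ
      ≤ ENNReal.ofReal a * μ s + ENNReal.ofReal (c * exp (-2 * a) / 2) := by
  refine (setLIntegral_ofReal_le_mul_add (fun x => ?_) s).trans
    (add_le_add_right (lintegral_ofReal_max_neg_log_norm_sub_le hZ hball a) _)
  have := le_max_left (-log ‖Z x‖ - a) 0
  exact max_le (by linarith) (by linarith [le_max_right (-log ‖Z x‖ - a) 0])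

end SmallBall

theorem stmt_1_general {Ω : Type*} [MeasurableSpace Ω] (ν : Measure Ω) [IsProbabilityMeasure ν]
    (Z : Ω → ℂ) (hZmeas : Measurable Z)
    (hlaw : ∀ s : ℝ, 0 ≤ s → ν {x | ‖Z x‖ ≤ s} = ENNReal.ofReal (1 - Real.exp (-s ^ 2 / 2)))
    (E : Set Ω) :
    ∫ x in E, max (-Real.log ‖Z x‖) 0 ∂ν
      ≤ (ν E).toReal * (Real.log (1 / (ν E).toReal) + 1 / 4) := by
  by_cases hE0 : ν E = 0
  · simp [Measure.restrict_eq_zero.mpr hE0, hE0]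
  set p := (ν E).toReal
  have hp : 0 < p := ENNReal.toReal_pos hE0 (measure_ne_top ν E)
  have hp1 : p ≤ 1 := ENNReal.toReal_le_of_le_ofReal zero_le_one (by simpa using prob_le_one)
  have hνE : ν E = ENNReal.ofReal p := (ENNReal.ofReal_toReal (measure_ne_top ν E)).symm
  have hlog : 0 ≤ log (1 / p) := log_nonneg (one_le_one_div hp hp1)
  have hexp : exp (-2 * log (1 / p)) = p ^ 2 := by
    rw [one_div, log_inv, neg_mul_neg, ← exp_log (pow_pos hp 2), log_pow]
    norm_num
  have hball (s : ℝ) (hs : 0 ≤ s) : ν {x | ‖Z x‖ ≤ s} ≤ ENNReal.ofReal (1 / 2 * s ^ 2) := by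
    rw [hlaw s hs]
    refine ENNReal.ofReal_le_ofReal ?_
    linarith [neg_div 2 (s ^ 2) ▸ one_sub_le_exp_neg (s ^ 2 / 2)]
  rw [integral_eq_lintegral_of_nonneg_ae (f := fun x => max (-log ‖Z x‖) 0)
    (.of_forall fun x => le_max_right _ _)
    (by fun_prop : Measurable fun x => max (-log ‖Z x‖) 0).aestronglyMeasurable]
  refine ENNReal.toReal_le_of_le_ofReal (mul_nonneg hp.le (by linarith)) ?_
  calc ∫⁻ x in E, ENNReal.ofReal (max (-log ‖Z x‖) 0) ∂ν
      ≤ ENNReal.ofReal (log (1 / p)) * ν E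
          + ENNReal.ofReal (1 / 2 * exp (-2 * log (1 / p)) / 2) :=
        setLIntegral_ofReal_max_neg_log_norm_le hZmeas hball hlog E
    _ = ENNReal.ofReal (log (1 / p) * p + p ^ 2 / 4) := by
        rw [hνE, ← ENNReal.ofReal_mul hlog, ← ENNReal.ofReal_add (by positivity) (by positivity),
          hexp]
        ring_nf
    _ ≤ ENNReal.ofReal (p * (log (1 / p) + 1 / 4)) := ENNReal.ofReal_le_ofReal (by nlinarith)

/-- For a standard complex Gaussian `Z` (with `Pr(|Z| ≤ s) = 1 - exp(-s²/2)`) with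
mean zero, for every measurable set `E`,
`∫_E log⁻|Z| dν ≤ ν(E) (log(1/ν(E)) + 1/4)`, where `log⁻ t = max (−log t) 0`. -/
theorem stmt_1 {Ω : Type*} [MeasurableSpace Ω] (ν : Measure Ω) [IsProbabilityMeasure ν]
    (Z : Ω → ℂ) (hZmeas : Measurable Z)
    (hmean : ∫ x, Z x ∂ν = 0)
    (hlaw : ∀ s : ℝ, 0 ≤ s → ν {x | ‖Z x‖ ≤ s} = ENNReal.ofReal (1 - Real.exp (-s ^ 2 / 2)))
    (E : Set Ω) (hE : MeasurableSet E) :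
    ∫ x in E, max (-Real.log ‖Z x‖) 0 ∂ν
      ≤ (ν E).toReal * (Real.log (1 / (ν E).toReal) + 1 / 4) :=
  stmt_1_general ν Z hZmeas hlaw E
end
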